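/- arXiv:1503.05381 — 2 statements merged into one kernel-verified Lean document; each statement's English description precedes it below -/
import Mathlib

section
/- Let μ be a probability measure on ℝ^d, {D_t} a family of trimmed regions for μ, and g: ℝ^d → [0,∞) Borel and square-integrable w.r.t. μ. Set I_v = ∫_{Q_v} g dμ, a nonincreasing continuous function of v on [0,1). Then for 0 < s < t < 1, the Lebesgue–Stieltjes integral satisfies ∫_s^t G_v dI_v = −∫_{D_t \ D_s} G_{τ(x)} g(x) μ(dx). -/
open MeasureTheory Set Real Filter

noncomputable section

/-- A family of *trimmed regions* for a probability measure `μ` on `ℝ^d`: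
closed sets `D t`, `t ∈ [0,1]`, nondecreasing, with `μ (D 0) = 0`, `μ (D t) < 1`
for `t < 1`, `D 1 = ℝ^d`, left jumps `μ`-null, and right-continuity. -/
structure TrimmedFamily (d : ℕ) (μ : Measure (Fin d → ℝ)) : Type where
  D : ℝ → Set (Fin d → ℝ)
  isClosed : ∀ t ∈ Icc (0:ℝ) 1, IsClosed (D t)
  mono : ∀ s t : ℝ, 0 ≤ s → s ≤ t → t ≤ 1 → D s ⊆ D t
  null_zero : μ (D 0) = 0
  meas_lt_one : ∀ t : ℝ, 0 ≤ t → t < 1 → μ (D t) < 1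
  one_eq_univ : D 1 = univ
  left_jump_null : ∀ t : ℝ, 0 < t → t ≤ 1 → μ (D t \ ⋃ s ∈ Ico (0:ℝ) t, D s) = 0
  right_cont : ∀ t : ℝ, 0 ≤ t → t < 1 → D t = ⋂ s ∈ Ioc t (1:ℝ), D s

namespace TrimmedFamily

variable {d : ℕ} {μ : Measure (Fin d → ℝ)} (T : TrimmedFamily d μ)

/-- `Q t = ℝ^d \ D t`. -/
def Q (t : ℝ) : Set (Fin d → ℝ) := (T.D t)ᶜ

/-- `τ(x) = inf {t ∈ [0,1] : x ∈ D t}`. -/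
def tau (x : Fin d → ℝ) : ℝ := sInf {t | t ∈ Icc (0:ℝ) 1 ∧ x ∈ T.D t}

/-- `μ_t = μ(Q_t)` (as a real number). -/
def muQ (t : ℝ) : ℝ := (μ (T.Q t)).toReal

/-- `G_t = (1/μ(Q_t)) ∫_{Q_t} g dμ`. -/
def G (g : (Fin d → ℝ) → ℝ) (t : ℝ) : ℝ := (∫ y in T.Q t, g y ∂μ) / T.muQ t

end TrimmedFamily

/-- The entropy `Ent_μ g = ∫ g log g dμ − (∫ g dμ) log (∫ g dμ)`
(with the convention `0 log 0 = 0`, which is automatic since `Real.log 0 = 0`). -/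
def entropy {α : Type*} [MeasurableSpace α] (μ : Measure α) (g : α → ℝ) : ℝ :=
  (∫ x, g x * Real.log (g x) ∂μ) - (∫ x, g x ∂μ) * Real.log (∫ x, g x ∂μ)

/-! Right-continuity of `t ↦ D_t` gives `x ∈ D_u ↔ τ(x) ≤ u`, hence `τ⁻¹ (a, b] = D_b \ D_a`.
So the image under `τ` of the measure `g dμ` on `D_t \ D_s` gives each `(a, b] ⊆ (s, t]` the
mass `I_a - I_b`: it is the Stieltjes measure `-dI` on `(s, t]`, and the identity is the
change of variables `v = τ(x)` in `∫ G_v (-dI_v)`. -/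

theorem MeasureTheory.Measure.restrict_Ioc_eq_of_measure_Ioc_eq {α : Type*}
    [TopologicalSpace α] [MeasurableSpace α] [SecondCountableTopology α] [LinearOrder α]
    [OrderTopology α] [BorelSpace α] {μ ν : Measure α} {s t : α} (hμ : μ (Ioc s t) ≠ ⊤)
    (h : ∀ a b, s ≤ a → a ≤ b → b ≤ t → μ (Ioc a b) = ν (Ioc a b)) :
    μ.restrict (Ioc s t) = ν.restrict (Ioc s t) := by
  have : IsFiniteMeasure (μ.restrict (Ioc s t)) := isFiniteMeasure_restrict.2 hμ
  have key : ∀ a b, μ (Ioc a b ∩ Ioc s t) = ν (Ioc a b ∩ Ioc s t) := by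
    intro a b
    rw [Ioc_inter_Ioc]
    rcases le_total (a ⊔ s) (b ⊓ t) with hle | hlt
    · exact h _ _ le_sup_right hle inf_le_right
    · rw [Ioc_eq_empty_of_le hlt, measure_empty, measure_empty]
  refine Measure.ext_of_Ioc_finite _ _ ?_ fun a b _ => ?_
  · rw [Measure.restrict_apply_univ, Measure.restrict_apply_univ, ← inter_self (Ioc s t)]
    exact key s t
  · rw [Measure.restrict_apply measurableSet_Ioc, Measure.restrict_apply measurableSet_Ioc]
    exact key a b

namespace TrimmedFamily

variable {d : ℕ} {μ : Measure (Fin d → ℝ)} (T : TrimmedFamily d μ)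

theorem measurableSet_D {t : ℝ} (ht : t ∈ Icc (0:ℝ) 1) : MeasurableSet (T.D t) :=
  (T.isClosed t ht).measurableSet

theorem Q_antitoneOn : AntitoneOn T.Q (Icc 0 1) :=
  fun u hu _ hv huv => compl_subset_compl.2 (T.mono u _ hu.1 huv hv.2)

theorem one_mem_tau_set (x : Fin d → ℝ) : (1 : ℝ) ∈ {t | t ∈ Icc (0:ℝ) 1 ∧ x ∈ T.D t} :=
  ⟨right_mem_Icc.2 zero_le_one, by simp [T.one_eq_univ]⟩

theorem bddBelow_tau_set (x : Fin d → ℝ) : BddBelow {t | t ∈ Icc (0:ℝ) 1 ∧ x ∈ T.D t} :=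
  ⟨0, fun _ ht => ht.1.1⟩

theorem tau_nonneg (x : Fin d → ℝ) : 0 ≤ T.tau x :=
  le_csInf ⟨1, T.one_mem_tau_set x⟩ fun _ ht => ht.1.1

theorem tau_le_one (x : Fin d → ℝ) : T.tau x ≤ 1 :=
  csInf_le (T.bddBelow_tau_set x) (T.one_mem_tau_set x)

theorem tau_le_iff {u : ℝ} (hu0 : 0 ≤ u) (hu1 : u < 1) (x : Fin d → ℝ) :
    T.tau x ≤ u ↔ x ∈ T.D u := by
  refine ⟨fun h => ?_, fun h => csInf_le (T.bddBelow_tau_set x) ⟨⟨hu0, hu1.le⟩, h⟩⟩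
  rw [T.right_cont u hu0 hu1]
  refine mem_iInter₂.2 fun w hw => ?_
  obtain ⟨r, ⟨hr, hxr⟩, hrw⟩ :=
    exists_lt_of_csInf_lt ⟨1, T.one_mem_tau_set x⟩ (h.trans_lt hw.1)
  exact T.mono r w hr.1 hrw.le hw.2 hxr

theorem preimage_tau_Ioc {a b : ℝ} (ha0 : 0 ≤ a) (ha1 : a < 1) (hb0 : 0 ≤ b) (hb1 : b < 1) :
    T.tau ⁻¹' Ioc a b = T.D b \ T.D a := by
  ext x
  rw [mem_preimage, mem_Ioc, Set.mem_sdiff, ← T.tau_le_iff ha0 ha1, ← T.tau_le_iff hb0 hb1,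
    not_le, and_comm]

theorem measurable_tau : Measurable T.tau := by
  refine measurable_of_Iic fun u => ?_
  rcases lt_or_ge u 0 with hu0 | hu0
  · convert MeasurableSet.empty
    exact eq_empty_of_forall_notMem fun x hx => (T.tau_nonneg x).not_gt (hu0.trans_le' hx)
  rcases lt_or_ge u 1 with hu1 | hu1
  · rw [show T.tau ⁻¹' Iic u = T.D u from Set.ext (T.tau_le_iff hu0 hu1)]
    exact T.measurableSet_D ⟨hu0, hu1.le⟩
  · convert MeasurableSet.univ
    exact eq_univ_of_forall fun x => (T.tau_le_one x).trans hu1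

variable {g : (Fin d → ℝ) → ℝ}

theorem setIntegral_D_diff (hg : Integrable g μ) {a b : ℝ} (ha : 0 ≤ a) (hab : a ≤ b)
    (hb : b ≤ 1) :
    ∫ x in T.D b \ T.D a, g x ∂μ = (∫ y in T.Q a, g y ∂μ) - ∫ y in T.Q b, g y ∂μ := by
  have hQ : T.Q b ⊆ T.Q a := T.Q_antitoneOn ⟨ha, hab.trans hb⟩ ⟨ha.trans hab, hb⟩ hab
  have hdiff : T.D b \ T.D a = T.Q a \ T.Q b := by
    ext x
    simp only [Q, Set.mem_sdiff, mem_compl_iff, not_not, and_comm]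
  rw [hdiff, setIntegral_sdiff (t := T.Q b) (T.measurableSet_D ⟨ha.trans hab, hb⟩).compl
    hg.integrableOn hQ]

theorem aemeasurable_G [IsFiniteMeasure μ] (hg : Integrable g μ) (hg0 : ∀ x, 0 ≤ g x)
    {J : Set ℝ} (hJ : MeasurableSet J) (hJ01 : J ⊆ Icc 0 1) (ν : Measure ℝ) :
    AEMeasurable (T.G g) (ν.restrict J) := by
  have hI : AntitoneOn (fun v => ∫ y in T.Q v, g y ∂μ) J := fun u hu v hv huv =>
    setIntegral_mono_set hg.integrableOn (Eventually.of_forall hg0)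
      (T.Q_antitoneOn (hJ01 hu) (hJ01 hv) huv).eventuallyLE
  have hmuQ : AntitoneOn T.muQ J := fun u hu v hv huv =>
    ENNReal.toReal_mono (measure_ne_top μ _)
      (measure_mono (T.Q_antitoneOn (hJ01 hu) (hJ01 hv) huv))
  exact (aemeasurable_restrict_of_antitoneOn hJ hI).div
    (aemeasurable_restrict_of_antitoneOn hJ hmuQ)

theorem map_tau_withDensity_eq_stieltjes (hg : Integrable g μ) (hg0 : ∀ x, 0 ≤ g x)
    {s t : ℝ} (hs : 0 ≤ s) (hst : s < t) (ht : t < 1) (S : StieltjesFunction ℝ)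
    (hS : ∀ v ∈ Icc s t, S v = - ∫ y in T.Q v, g y ∂μ) :
    ((μ.withDensity fun x => ENNReal.ofReal (g x)).restrict (T.D t \ T.D s)).map T.tau
      = S.measure.restrict (Ioc s t) := by
  have : IsFiniteMeasure (μ.withDensity fun x => ENNReal.ofReal (g x)) :=
    isFiniteMeasure_withDensity_ofReal hg.2
  rw [← T.preimage_tau_Ioc hs (hst.trans ht) (hs.trans hst.le) ht,
    ← Measure.restrict_map T.measurable_tau measurableSet_Ioc]
  refine Measure.restrict_Ioc_eq_of_measure_Ioc_eq (measure_ne_top _ _)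
    fun a b ha hab hb => ?_
  have ha0 : 0 ≤ a := hs.trans ha
  rw [Measure.map_apply T.measurable_tau measurableSet_Ioc,
    T.preimage_tau_Ioc ha0 ((hab.trans hb).trans_lt ht) (ha0.trans hab) (hb.trans_lt ht),
    withDensity_apply _ ((T.measurableSet_D ⟨ha0.trans hab, hb.trans ht.le⟩).diff
      (T.measurableSet_D ⟨ha0, (hab.trans hb).trans ht.le⟩)),
    ← ofReal_integral_eq_lintegral_ofReal hg.integrableOn (Eventually.of_forall hg0),
    T.setIntegral_D_diff hg ha0 hab (hb.trans ht.le), S.measure_Ioc,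
    hS a ⟨ha, hab.trans hb⟩, hS b ⟨ha.trans hab, hb⟩, neg_sub_neg]

end TrimmedFamily

/-- Identity: `∫_s^t G_v dI_v = −∫_{D_t \ D_s} G_{τ(x)} g(x) μ(dx)` for `0 < s < t < 1`,
where `I_v = ∫_{Q_v} g dμ` is nonincreasing and continuous on `[0,1)`. The
Lebesgue–Stieltjes integral w.r.t. `v ↦ I_v` is encoded via any Stieltjes function `S`
agreeing with `−I_·` on `[s,t]`, so that `∫_s^t G_v dI_v = −∫_{(s,t]} G_v dS`. -/
theorem stieltjes_integral_G_dI
    {d : ℕ} (μ : Measure (Fin d → ℝ)) [IsProbabilityMeasure μ]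
    (T : TrimmedFamily d μ) (g : (Fin d → ℝ) → ℝ)
    (hg_meas : Measurable g) (hg_nonneg : ∀ x, 0 ≤ g x) (hg_sq : MemLp g 2 μ)
    (s t : ℝ) (hs : 0 < s) (hst : s < t) (ht : t < 1)
    (S : StieltjesFunction ℝ) (hS : ∀ v ∈ Icc s t, S v = - ∫ y in T.Q v, g y ∂μ) :
    -∫ v in Ioc s t, T.G g v ∂S.measure
      = -∫ x in T.D t \ T.D s, T.G g (T.tau x) * g x ∂μ := by
  have hg : Integrable g μ := hg_sq.integrable one_le_two
  have hA : MeasurableSet (T.D t \ T.D s) :=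
    (T.measurableSet_D ⟨(hs.trans hst).le, ht.le⟩).diff
      (T.measurableSet_D ⟨hs.le, (hst.trans ht).le⟩)
  have hmap := T.map_tau_withDensity_eq_stieltjes hg hg_nonneg hs.le hst ht S hS
  have hGmeas : AEMeasurable (T.G g) (S.measure.restrict (Ioc s t)) :=
    T.aemeasurable_G hg hg_nonneg measurableSet_Ioc
      (fun v hv => ⟨hs.le.trans hv.1.le, hv.2.trans ht.le⟩) S.measure
  rw [← hmap] at hGmeas
  rw [← hmap, integral_map T.measurable_tau.aemeasurable hGmeas.aestronglyMeasurable,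
    setIntegral_withDensity_eq_setIntegral_toReal_smul hg_meas.ennreal_ofReal
      (Eventually.of_forall fun _ => ENNReal.ofReal_lt_top) _ hA]
  refine congrArg Neg.neg (setIntegral_congr_fun hA fun x _ => ?_)
  rw [ENNReal.toReal_ofReal (hg_nonneg x), smul_eq_mul, mul_comm]
end
end

section
/- Let μ be a probability measure on ℝ with everywhere positive density p_μ, let s be the reflection map of the quantile trimmed regions, and set W(x) = (F̂_μ(x)/p_μ(x))² log(1/(2F̂_μ(x))). Then for every locally absolutely continuous f: ℝ → ℝ, ∫_ℝ W(x) (f′(s(x)))² (s′(x))² μ(dx) = ∫_ℝ W(y) (f′(y))² μ(dy), where both sides may be +∞. -/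
/-! A positive density makes `F_μ` a continuous increasing bijection `ℝ → (0,1)` whose inverse on
`(0,1)` is the quantile function. Hence `τ(x) = |2F_μ(x) − 1|` and `s(x) = F_μ⁻¹(1 − F_μ(x))`, so `s`
is an antitone involution with `F_μ ∘ s = 1 − F_μ`; in particular `s` preserves `μ`. Since also
`F̂_μ ∘ s = F̂_μ`, the weight satisfies `W(x) (s′(x))² = W(s(x))`, so the left integrand is
`g ∘ s` for `g = W (f′)²`, and the identity is the change of variables along `s`. -/

open MeasureTheory Set Real Filter

noncomputable section

/-- The cumulative distribution function `F_μ(x) = μ((−∞,x])`. -/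
def cdfR (μ : Measure ℝ) (x : ℝ) : ℝ := (μ (Iic x)).toReal

/-- The quantile function `q_v = F_μ^{−1}(v)`. -/
def quantile (μ : Measure ℝ) (v : ℝ) : ℝ := sInf {x | v ≤ cdfR μ x}

/-- The quantile trimmed regions: `D_t = [q_{1/2−t/2}, q_{1/2+t/2}]` for `t ∈ [0,1)`
and `D_1 = ℝ`. -/
def DQ (μ : Measure ℝ) (t : ℝ) : Set ℝ :=
  if t < 1 then Icc (quantile μ (1/2 - t/2)) (quantile μ (1/2 + t/2)) else univ

/-- `τ(x) = inf {t ∈ [0,1] : x ∈ D_t}` for the quantile trimmed regions. -/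
def tauQ (μ : Measure ℝ) (x : ℝ) : ℝ := sInf {t | t ∈ Icc (0:ℝ) 1 ∧ x ∈ DQ μ t}

/-- The reflection map of the quantile trimmed regions: for `x ≠ m` (the median),
`s(x)` is the endpoint of `D_{τ(x)}` other than `x`, and `s(m) = m`. -/
def reflQ (μ : Measure ℝ) (x : ℝ) : ℝ :=
  if x < quantile μ (1/2) then quantile μ (1/2 + tauQ μ x / 2)
  else if quantile μ (1/2) < x then quantile μ (1/2 - tauQ μ x / 2)
  else quantile μ (1/2)

/-- The symmetric σ-algebra `F̂`: Borel sets `A` such that `x ∈ A ↔ s(x) ∈ A`. -/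
def symmMS (s : ℝ → ℝ) : MeasurableSpace ℝ where
  MeasurableSet' A := MeasurableSet A ∧ ∀ x, x ∈ A ↔ s x ∈ A
  measurableSet_empty := ⟨MeasurableSet.empty, fun _ => Iff.rfl⟩
  measurableSet_compl := by
    rintro A ⟨hA, h⟩
    exact ⟨hA.compl, fun x => by simp only [Set.mem_compl_iff]; exact not_congr (h x)⟩
  measurableSet_iUnion := by
    intro g hg
    refine ⟨MeasurableSet.iUnion fun i => (hg i).1, fun x => ?_⟩
    simp only [Set.mem_iUnion]
    exact exists_congr fun i => (hg i).2 x

/-- The weight `W = (F̂_μ/p_μ)² log(1/(2F̂_μ))`, with `F̂_μ = min(F_μ, 1 − F_μ)`. -/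
def Wq (μ : Measure ℝ) (pμ : ℝ → ℝ) (x : ℝ) : ℝ :=
  (min (cdfR μ x) (1 - cdfR μ x) / pμ x) ^ 2
    * Real.log (1 / (2 * min (cdfR μ x) (1 - cdfR μ x)))

open ProbabilityTheory

theorem Function.Involutive.le_comm_of_antitone {α : Type*} [Preorder α] {f : α → α}
    (hf : Function.Involutive f) (hf' : Antitone f) (a b : α) : f a ≤ b ↔ f b ≤ a :=
  ⟨fun h => hf a ▸ hf' h, fun h => hf b ▸ hf' h⟩

section Quantile

variable {μ : Measure ℝ} [IsProbabilityMeasure μ]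

lemma cdfR_eq_cdf : cdfR μ = cdf μ := funext fun x => (cdf_eq_real μ x).symm

lemma ofReal_cdfR (x : ℝ) : ENNReal.ofReal (cdfR μ x) = μ (Iic x) := by
  rw [cdfR_eq_cdf, ofReal_cdf]

lemma measure_Ioi_eq_ofReal (b : ℝ) : μ (Ioi b) = ENNReal.ofReal (1 - cdfR μ b) := by
  rw [← compl_Iic, prob_compl_eq_one_sub measurableSet_Iic, ← ofReal_cdfR,
    ENNReal.ofReal_sub 1 (q := cdfR μ b) ENNReal.toReal_nonneg, ENNReal.ofReal_one]

lemma continuous_cdfR [NullSingletonClass μ] : Continuous (cdfR μ) := by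
  rw [cdfR_eq_cdf, continuous_iff_continuousAt]
  intro x
  rw [(cdf μ).mono.continuousAt_iff_leftLim_eq_rightLim, (cdf μ).rightLim_eq]
  have h := (cdf μ).measure_singleton x
  rw [measure_cdf, measure_singleton, eq_comm, ENNReal.ofReal_eq_zero] at h
  linarith [(cdf μ).mono.leftLim_le (le_refl x)]

lemma strictMono_cdfR (hμ : volume ≪ μ) : StrictMono (cdfR μ) := by
  intro a b hab
  have hpos : μ (Ioc a b) ≠ 0 := fun h => hab.not_ge (by simpa using hμ h)
  rw [cdfR, cdfR, ← Iic_union_Ioc_eq_Iic hab.le,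
    measure_union (Iic_disjoint_Ioc le_rfl) measurableSet_Ioc]
  exact ENNReal.toReal_strict_mono (by finiteness) (ENNReal.lt_add_right (by finiteness) hpos)

lemma cdfR_mem_Ioo (hμ : volume ≪ μ) (x : ℝ) : cdfR μ x ∈ Ioo 0 1 :=
  ⟨(ENNReal.toReal_nonneg).trans_lt (strictMono_cdfR hμ (sub_one_lt x)),
    (strictMono_cdfR hμ (lt_add_one x)).trans_le (by rw [cdfR_eq_cdf]; exact cdf_le_one μ _)⟩

lemma abs_two_mul_cdfR_sub_one_lt (hμ : volume ≪ μ) (x : ℝ) : |2 * cdfR μ x - 1| < 1 := by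
  have hF := cdfR_mem_Ioo hμ x
  exact abs_lt.2 ⟨by linarith [hF.1], by linarith [hF.2]⟩

lemma exists_cdfR_eq [NullSingletonClass μ] {v : ℝ} (hv : v ∈ Ioo 0 1) : ∃ x, cdfR μ x = v := by
  refine mem_range_of_exists_le_of_exists_ge continuous_cdfR ?_ ?_
  · rw [cdfR_eq_cdf]
    exact ((tendsto_cdf_atBot μ).eventually (eventually_le_nhds hv.1)).exists
  · rw [cdfR_eq_cdf]
    exact ((tendsto_cdf_atTop μ).eventually (eventually_ge_nhds hv.2)).exists

lemma quantile_cdfR (hμ : volume ≪ μ) (x : ℝ) : quantile μ (cdfR μ x) = x := by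
  rw [quantile, show {y | cdfR μ x ≤ cdfR μ y} = Ici x from
    ext fun y => (strictMono_cdfR hμ).le_iff_le, csInf_Ici]

variable [NullSingletonClass μ]

lemma cdfR_quantile (hμ : volume ≪ μ) {v : ℝ} (hv : v ∈ Ioo 0 1) :
    cdfR μ (quantile μ v) = v := by
  obtain ⟨x, rfl⟩ := exists_cdfR_eq (μ := μ) hv
  rw [quantile_cdfR hμ]

lemma quantile_le_iff (hμ : volume ≪ μ) {v : ℝ} (hv : v ∈ Ioo 0 1) (x : ℝ) :
    quantile μ v ≤ x ↔ v ≤ cdfR μ x := by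
  obtain ⟨y, rfl⟩ := exists_cdfR_eq (μ := μ) hv
  rw [quantile_cdfR hμ, (strictMono_cdfR hμ).le_iff_le]

lemma le_quantile_iff (hμ : volume ≪ μ) {v : ℝ} (hv : v ∈ Ioo 0 1) (x : ℝ) :
    x ≤ quantile μ v ↔ cdfR μ x ≤ v := by
  obtain ⟨y, rfl⟩ := exists_cdfR_eq (μ := μ) hv
  rw [quantile_cdfR hμ, (strictMono_cdfR hμ).le_iff_le]

lemma mem_DQ_iff (hμ : volume ≪ μ) {t : ℝ} (ht : -1 < t) (x : ℝ) :
    x ∈ DQ μ t ↔ |2 * cdfR μ x - 1| ≤ t := by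
  rw [DQ]
  split_ifs with ht1
  · rw [mem_Icc, quantile_le_iff hμ ⟨by linarith, by linarith⟩,
      le_quantile_iff hμ ⟨by linarith, by linarith⟩, abs_le]
    constructor <;> rintro ⟨h1, h2⟩ <;> constructor <;> linarith
  · exact iff_of_true (mem_univ x) ((abs_two_mul_cdfR_sub_one_lt hμ x).le.trans (not_lt.1 ht1))

lemma tauQ_eq (hμ : volume ≪ μ) (x : ℝ) : tauQ μ x = |2 * cdfR μ x - 1| := by
  have hset : {t | t ∈ Icc (0:ℝ) 1 ∧ x ∈ DQ μ t} = Icc |2 * cdfR μ x - 1| 1 := by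
    ext t
    constructor
    · rintro ⟨⟨ht0, ht1⟩, hx⟩
      exact ⟨(mem_DQ_iff hμ (by linarith) x).1 hx, ht1⟩
    · rintro ⟨hxt, ht1⟩
      have ht0 := (abs_nonneg _).trans hxt
      exact ⟨⟨ht0, ht1⟩, (mem_DQ_iff hμ (by linarith) x).2 hxt⟩
  rw [tauQ, hset, csInf_Icc (abs_two_mul_cdfR_sub_one_lt hμ x).le]

lemma reflQ_eq (hμ : volume ≪ μ) (x : ℝ) : reflQ μ x = quantile μ (1 - cdfR μ x) := by
  have hlt : x < quantile μ (1/2) ↔ cdfR μ x < 1/2 := by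
    rw [← not_le, quantile_le_iff hμ ⟨by norm_num, by norm_num⟩, not_le]
  have hgt : quantile μ (1/2) < x ↔ 1/2 < cdfR μ x := by
    rw [← not_le, le_quantile_iff hμ ⟨by norm_num, by norm_num⟩, not_le]
  rw [reflQ, tauQ_eq hμ]
  split_ifs with h1 h2
  · rw [abs_of_neg (by linarith [hlt.1 h1])]
    congr 1
    ring
  · rw [abs_of_pos (by linarith [hgt.1 h2])]
    congr 1
    ring
  · have : cdfR μ x = 1/2 := by linarith [not_lt.1 (mt hlt.2 h1), not_lt.1 (mt hgt.2 h2)]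
    rw [this]
    norm_num

lemma cdfR_reflQ (hμ : volume ≪ μ) (x : ℝ) : cdfR μ (reflQ μ x) = 1 - cdfR μ x := by
  have hF := cdfR_mem_Ioo hμ x
  rw [reflQ_eq hμ, cdfR_quantile hμ ⟨by linarith [hF.2], by linarith [hF.1]⟩]

lemma min_cdfR_reflQ (hμ : volume ≪ μ) (x : ℝ) :
    min (cdfR μ (reflQ μ x)) (1 - cdfR μ (reflQ μ x)) = min (cdfR μ x) (1 - cdfR μ x) := by
  rw [cdfR_reflQ hμ, sub_sub_cancel, min_comm]

lemma reflQ_involutive (hμ : volume ≪ μ) : Function.Involutive (reflQ μ) := fun x => by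
  rw [reflQ_eq hμ, cdfR_reflQ hμ, sub_sub_cancel, quantile_cdfR hμ]

lemma antitone_reflQ (hμ : volume ≪ μ) : Antitone (reflQ μ) := fun a b hab => by
  rw [← (strictMono_cdfR hμ).le_iff_le, cdfR_reflQ hμ, cdfR_reflQ hμ]
  linarith [(strictMono_cdfR hμ).monotone hab]

lemma measurePreserving_reflQ (hμ : volume ≪ μ) : MeasurePreserving (reflQ μ) μ μ := by
  have hmeas : Measurable (reflQ μ) := (antitone_reflQ hμ).measurable
  refine ⟨hmeas, Measure.ext_of_Iic _ _ fun a => ?_⟩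
  have hpre : reflQ μ ⁻¹' Iic a = Ici (reflQ μ a) :=
    ext fun y => (reflQ_involutive hμ).le_comm_of_antitone (antitone_reflQ hμ) y a
  rw [Measure.map_apply hmeas measurableSet_Iic, hpre, measure_congr Ioi_ae_eq_Ici.symm,
    measure_Ioi_eq_ofReal, cdfR_reflQ hμ, sub_sub_cancel, ofReal_cdfR]

end Quantile

lemma Wq_mul_div_sq {μ : Measure ℝ} {pμ : ℝ → ℝ} {x y : ℝ} (hx : pμ x ≠ 0)
    (h : min (cdfR μ x) (1 - cdfR μ x) = min (cdfR μ y) (1 - cdfR μ y)) :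
    Wq μ pμ x * (pμ x / pμ y) ^ 2 = Wq μ pμ y := by
  rw [Wq, Wq, h, mul_right_comm, ← mul_pow, div_mul_div_cancel₀ hx]

theorem integral_W_reflected_general
    (μ : Measure ℝ) [IsProbabilityMeasure μ]
    (pμ : ℝ → ℝ) (hpμ_pos : ∀ x, 0 < pμ x) (hpμ_meas : Measurable pμ)
    (hμ : μ = volume.withDensity fun x => ENNReal.ofReal (pμ x))
    (f' : ℝ → ℝ) :
    ∫⁻ x, ENNReal.ofReal
        (Wq μ pμ x * (f' (reflQ μ x)) ^ 2 * (-(pμ x) / pμ (reflQ μ x)) ^ 2) ∂μ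
      = ∫⁻ y, ENNReal.ofReal (Wq μ pμ y * (f' y) ^ 2) ∂μ := by
  have hvol : volume ≪ μ := hμ ▸ withDensity_absolutelyContinuous'
    hpμ_meas.ennreal_ofReal.aemeasurable (ae_of_all _ fun x => (ENNReal.ofReal_pos.2 (hpμ_pos x)).ne')
  have : NullSingletonClass μ := hμ ▸ inferInstance
  have hs := measurePreserving_reflQ hvol
  calc _ = ∫⁻ x, ENNReal.ofReal (Wq μ pμ (reflQ μ x) * f' (reflQ μ x) ^ 2) ∂μ := by
        refine lintegral_congr fun x => ?_
        rw [neg_div, neg_sq, mul_right_comm,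
          Wq_mul_div_sq (hpμ_pos x).ne' (min_cdfR_reflQ hvol x).symm]
    _ = _ := hs.lintegral_comp_emb
        (MeasurableEquiv.ofInvolutive _ (reflQ_involutive hvol) hs.measurable).measurableEmbedding
        fun y => ENNReal.ofReal (Wq μ pμ y * f' y ^ 2)

/-- The change-of-variables identity: for every locally absolutely continuous `f`
(with a.e. derivative `f′`, encoded by the fundamental theorem of calculus),
`∫ W(x) (f′(s(x)))² (s′(x))² μ(dx) = ∫ W(y) (f′(y))² μ(dy)`, where
`s′(x) = −p_μ(x)/p_μ(s(x))`; both sides may be `+∞`, so they are stated as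
Lebesgue integrals of nonnegative functions. -/
theorem integral_W_reflected
    (μ : Measure ℝ) [IsProbabilityMeasure μ]
    (pμ : ℝ → ℝ) (hpμ_pos : ∀ x, 0 < pμ x) (hpμ_meas : Measurable pμ)
    (hμ : μ = volume.withDensity fun x => ENNReal.ofReal (pμ x))
    (f f' : ℝ → ℝ)
    (hf'_int : ∀ u v : ℝ, IntervalIntegrable f' volume u v)
    (hFTC : ∀ u v : ℝ, ∫ x in u..v, f' x = f v - f u) :
    ∫⁻ x, ENNReal.ofReal
        (Wq μ pμ x * (f' (reflQ μ x)) ^ 2 * (-(pμ x) / pμ (reflQ μ x)) ^ 2) ∂μ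
      = ∫⁻ y, ENNReal.ofReal (Wq μ pμ y * (f' y) ^ 2) ∂μ :=
  integral_W_reflected_general μ pμ hpμ_pos hpμ_meas hμ f'
end
end
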